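/- arXiv:2208.12865 — 3 statements merged into one kernel-verified Lean document; each statement's English description precedes it below -/
import Mathlib

section
/- Let f and g be bounded measurable functions from [1,∞) to [0,∞). Suppose f(α) ≤ 1/2 for all α ∈ [1,10], g(α) ≤ 1/4 for all α ∈ [1,∞), and f(α) ≤ f(α/10)² + g(α) for all α ≥ 10. If g(α) → 0 as α → ∞, then f(α) → 0 as α → ∞. -/
open Filter

/-- Renormalization lemma: if `f(α) ≤ f(α/10)² + g(α)` for `α ≥ 10`, `f ≤ 1/2` on `[1,10]`,
`g ≤ 1/4` on `[1,∞)`, both bounded, measurable and nonnegative on `[1,∞)`, and `g → 0` at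
infinity, then `f → 0` at infinity. -/
theorem stmt_0 (f g : ℝ → ℝ)
    (hf_meas : Measurable f) (hg_meas : Measurable g)
    (hf_bdd : ∃ M : ℝ, ∀ α : ℝ, 1 ≤ α → |f α| ≤ M)
    (hg_bdd : ∃ M : ℝ, ∀ α : ℝ, 1 ≤ α → |g α| ≤ M)
    (hf_nonneg : ∀ α : ℝ, 1 ≤ α → 0 ≤ f α)
    (hg_nonneg : ∀ α : ℝ, 1 ≤ α → 0 ≤ g α)
    (hf_small : ∀ α : ℝ, 1 ≤ α → α ≤ 10 → f α ≤ 1 / 2)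
    (hg_small : ∀ α : ℝ, 1 ≤ α → g α ≤ 1 / 4)
    (hrec : ∀ α : ℝ, 10 ≤ α → f α ≤ (f (α / 10)) ^ 2 + g α)
    (hg_lim : Tendsto g atTop (nhds 0)) :
    Tendsto f atTop (nhds 0) := by
  -- Step 1: f ≤ 1/2 on [1, ∞)
  have half : ∀ α : ℝ, 1 ≤ α → f α ≤ 1 / 2 := by
    have key : ∀ n : ℕ, ∀ α : ℝ, 1 ≤ α → α ≤ 10 ^ (n + 1) → f α ≤ 1 / 2 := by
      intro n
      induction n with
      | zero =>
        intro α h1 h2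
        exact hf_small α h1 (by simpa using h2)
      | succ n ih =>
        intro α h1 h2
        by_cases h10 : α ≤ 10
        · exact hf_small α h1 h10
        · push_neg at h10
          have h10' : (10:ℝ) ≤ α := le_of_lt h10
          have hdiv1 : (1:ℝ) ≤ α / 10 := by
            rw [le_div_iff₀ (by norm_num : (0:ℝ) < 10)]; linarith
          have hdiv2 : α / 10 ≤ 10 ^ (n + 1) := by
            rw [div_le_iff₀ (by norm_num : (0:ℝ) < 10)]
            calc α ≤ 10 ^ (n + 1 + 1) := h2
            _ = 10 ^ (n + 1) * 10 := by ring
          have hfq := ih (α / 10) hdiv1 hdiv2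
          have hf0 := hf_nonneg (α / 10) hdiv1
          have hg := hg_small α (by linarith)
          have := hrec α h10'
          nlinarith
    intro α h1
    obtain ⟨n, hn⟩ := pow_unbounded_of_one_lt α (by norm_num : (1:ℝ) < 10)
    exact key n α h1 (le_of_lt (hn.trans_le (pow_le_pow_right₀ (by norm_num) (Nat.le_succ n))))
  -- Step 2: quantitative decay
  rw [Metric.tendsto_atTop]
  intro ε' hε'
  set ε : ℝ := min (ε' / 4) (1 / 16) with hεdef
  have hε0 : 0 < ε := lt_min (by linarith) (by norm_num)
  have hε16 : ε ≤ 1 / 16 := min_le_right _ _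
  have hεε' : ε ≤ ε' / 4 := min_le_left _ _
  obtain ⟨A, hA⟩ := (Metric.tendsto_atTop.mp hg_lim) ε hε0
  set B : ℝ := max A 10 with hBdef
  have hB10 : (10:ℝ) ≤ B := le_max_right _ _
  have hBA : A ≤ B := le_max_left _ _
  have claim : ∀ n : ℕ, ∀ α : ℝ, B * 10 ^ n ≤ α →
      f α ≤ 2 * ε + (1 / 2) * (3 / 4) ^ n := by
    intro n
    induction n with
    | zero =>
      intro α hα
      simp only [pow_zero, mul_one] at hα
      have : f α ≤ 1 / 2 := half α (by linarith)
      simp only [pow_zero]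
      linarith
    | succ n ih =>
      intro α hα
      have hpow : (1:ℝ) ≤ 10 ^ n := one_le_pow₀ (by norm_num : (1:ℝ) ≤ 10)
      have hBpos : (0:ℝ) ≤ B := by linarith
      have hB10n : (10:ℝ) ≤ B * 10 ^ n := by nlinarith [mul_le_mul hB10 hpow (by norm_num : (0:ℝ) ≤ 1) hBpos]
      have hα10 : (10:ℝ) ≤ α := by rw [pow_succ] at hα; nlinarith
      have hα1 : (1:ℝ) ≤ α := by linarith
      have hdiv : B * 10 ^ n ≤ α / 10 := by
        rw [le_div_iff₀ (by norm_num : (0:ℝ) < 10)]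
        calc B * 10 ^ n * 10 = B * 10 ^ (n + 1) := by ring
        _ ≤ α := hα
      have hdiv1 : (1:ℝ) ≤ α / 10 := by
        rw [le_div_iff₀ (by norm_num : (0:ℝ) < 10)]; linarith
      have hαA : A ≤ α := by nlinarith
      have hgα : g α ≤ ε := by
        have := hA α hαA
        rw [Real.dist_eq, sub_zero] at this
        exact le_of_lt ((le_abs_self _).trans_lt this)
      have hfq := ih (α / 10) hdiv
      have hf0 := hf_nonneg (α / 10) hdiv1
      have hrecα := hrec α hα10
      have hd : ((3:ℝ) / 4) ^ n ≤ 1 := pow_le_one₀ (by norm_num) (by norm_num)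
      have hd0 : (0:ℝ) ≤ (3 / 4 : ℝ) ^ n := by positivity
      have : ((3:ℝ) / 4) ^ (n + 1) = (3 / 4) * (3 / 4) ^ n := by ring
      rw [this]
      nlinarith [sq_nonneg (f (α / 10))]
  -- choose n with (1/2)*(3/4)^n < ε'/2
  obtain ⟨n, hn⟩ := exists_pow_lt_of_lt_one (show (0:ℝ) < ε' / 2 by linarith)
    (by norm_num : (3:ℝ) / 4 < 1)
  refine ⟨B * 10 ^ n, fun α hα => ?_⟩
  have hpow : (1:ℝ) ≤ 10 ^ n := one_le_pow₀ (by norm_num : (1:ℝ) ≤ 10)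
  have hα1 : (1:ℝ) ≤ α := by nlinarith [mul_le_mul hB10 hpow (by norm_num : (0:ℝ) ≤ 1) (by linarith : (0:ℝ) ≤ B)]
  have hfα := claim n α hα
  rw [Real.dist_eq, sub_zero, abs_of_nonneg (hf_nonneg α hα1)]
  nlinarith
end

section
/- Suppose a_c < ∞ and v_min > 4·a_c/T with v_min ≤ v_max < ∞. Then there exist ε > 0 and b > 0 with v_min·(T/2 − ε)/2 > a_c(b), and for every ρ satisfying max(T/2 − ε, T/2 − b/(2 v_max)) < ρ ≤ T/2, the graph S^{v_min ρ/2, v_max(T−2ρ)} percolates with probability zero. Consequently ρ'_c(T, μ_v) := sup{0 ≤ ρ ≤ T/2 : P(S^{v_min ρ/2, v_max(T−2ρ)} percolates) > 0} satisfies ρ'_c(T, μ_v) < T/2. -/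
open Filter

/-- If `a_c = lim_{b↓0} a_c(b) < ∞` and `v_min > 4·a_c/T` (with `0 < v_min ≤ v_max < ∞`),
then there are `ε > 0` and `b > 0` with `v_min(T/2−ε)/2 > a_c(b)`, such that for every `ρ`
with `max(T/2−ε, T/2−b/(2v_max)) < ρ ≤ T/2` the graph `S^{v_min ρ/2, v_max(T−2ρ)}`
percolates with probability zero; consequently
`ρ'_c = sup{0 ≤ ρ ≤ T/2 : P(S^{v_min ρ/2, v_max(T−2ρ)} percolates) > 0} < T/2`.
Here `P a b` denotes the percolation probability of `S^{a,b}` and `ac b = a_c(b)`. -/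
theorem stmt_9 (T vmin vmax acInf : ℝ) (P : ℝ → ℝ → ℝ) (ac : ℝ → ℝ)
    (hT : 0 < T) (hv : 0 < vmin) (hvv : vmin ≤ vmax)
    (hP0 : ∀ a b : ℝ, 0 ≤ P a b)
    (hPa : ∀ a a' b : ℝ, a ≤ a' → P a' b ≤ P a b)
    (hPb : ∀ a b b' : ℝ, b ≤ b' → P a b ≤ P a b')
    (hac0 : ∀ b a : ℝ, ac b < a → P a b = 0)
    (hacmono : ∀ b b' : ℝ, b ≤ b' → ac b ≤ ac b')
    (hacInf : ∀ b : ℝ, 0 < b → acInf ≤ ac b)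
    (haclim : Tendsto ac (nhdsWithin 0 (Set.Ioi 0)) (nhds acInf))
    (hspeed : 4 * acInf / T < vmin) :
    ∃ ε > (0 : ℝ), ∃ b > (0 : ℝ), ac b < vmin * (T / 2 - ε) / 2 ∧
      (∀ ρ : ℝ, max (T / 2 - ε) (T / 2 - b / (2 * vmax)) < ρ → ρ ≤ T / 2 →
        P (vmin * ρ / 2) (vmax * (T - 2 * ρ)) = 0) ∧
      sSup {ρ : ℝ | 0 ≤ ρ ∧ ρ ≤ T / 2 ∧ 0 < P (vmin * ρ / 2) (vmax * (T - 2 * ρ))} < T / 2 := by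
  have hvmax : 0 < vmax := lt_of_lt_of_le hv hvv
  have hA : acInf < vmin * T / 4 := by
    have := (div_lt_iff₀ hT).mp hspeed
    nlinarith
  have hb : ∃ b > (0:ℝ), ac b < vmin * T / 4 := by
    have hev : ∀ᶠ x in nhdsWithin (0:ℝ) (Set.Ioi 0), ac x < vmin * T / 4 :=
      haclim.eventually_lt_const hA
    have hmem : ∀ᶠ x in nhdsWithin (0:ℝ) (Set.Ioi 0), x ∈ Set.Ioi (0:ℝ) :=
      self_mem_nhdsWithin
    obtain ⟨b, hb1, hb2⟩ := (hmem.and hev).exists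
    exact ⟨b, hb1, hb2⟩
  obtain ⟨b, hbpos, hacb⟩ := hb
  set D : ℝ := vmin * T / 4 - ac b with hD
  have hDpos : 0 < D := by simp [hD]; linarith
  set ε : ℝ := min (T/4) (D/vmin) with hε
  have hεpos : 0 < ε := by positivity
  have hεT : ε ≤ T/4 := min_le_left _ _
  have hεD : vmin * ε ≤ D := by
    rw [← le_div_iff₀' hv]; exact min_le_right _ _
  have hεD2 : vmin * ε ≤ vmin * T / 4 - ac b := hD ▸ hεD
  have hgap : ac b < vmin * (T / 2 - ε) / 2 := by linarith
  have hmid : ∀ ρ : ℝ, max (T / 2 - ε) (T / 2 - b / (2 * vmax)) < ρ → ρ ≤ T / 2 →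
      P (vmin * ρ / 2) (vmax * (T - 2 * ρ)) = 0 := by
    intro ρ hρ1 hρ2
    have hρa : T/2 - ε < ρ := lt_of_le_of_lt (le_max_left _ _) hρ1
    have hρb : T/2 - b/(2*vmax) < ρ := lt_of_le_of_lt (le_max_right _ _) hρ1
    have key : b/(2*vmax)*(2*vmax) = b := div_mul_cancel₀ b (by positivity)
    have hb' : vmax * (T - 2*ρ) ≤ b := by nlinarith
    have hacb' : ac b < vmin * ρ / 2 := by nlinarith
    have h0 := hac0 b _ hacb'
    have := hPb (vmin * ρ / 2) (vmax * (T - 2*ρ)) b hb'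
    have := hP0 (vmin * ρ / 2) (vmax * (T - 2*ρ))
    linarith
  refine ⟨ε, hεpos, b, hbpos, hgap, hmid, ?_⟩
  set M : ℝ := max (T/2 - ε) (T/2 - b/(2*vmax)) with hM
  have hMlt : M < T/2 := by
    apply max_lt
    · linarith
    · have : 0 < b/(2*vmax) := by positivity
      linarith
  have hM0 : 0 ≤ M := by
    have : T/2 - ε ≤ M := le_max_left _ _
    linarith
  refine lt_of_le_of_lt (Real.sSup_le ?_ hM0) hMlt
  rintro ρ ⟨hρ0, hρT, hρP⟩
  by_contra h
  push_neg at h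
  have := hmid ρ h hρT
  linarith
end

section
/- Let S be an exponentially stabilizing planar segment process with stabilization radii R = (R_x), i.e., there is c > 0 with P(sup_{y ∈ Q_n ∩ ℚ²} R_y ≥ n) ≤ exp(−c n) for all large n. For a > 0 define a site z ∈ ℤ² to be n-open if (a) R(Q_{6n}(nz)) < n and (b) no street of S intersecting Q_{6n}(nz) has length ≥ a, and n-closed otherwise. If n > b and S^{a,b} has an unbounded connected component, then the set of n-closed sites in ℤ² has an unbounded nearest-neighbor connected component. -/
/-!
Let `L` be the union of the streets of length `≥ a` and send a point `x` to its nearest site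
`⌊x / n⌉` of `ℤ²`. A point of `L` closes every site `z` with `x ∈ Q_{6n}(nz)`; these sites form
a box of `ℤ²`, which contains the nearest sites of all points within `5n/2` of `x`. So the nearest
sites of the endpoints of a bridge (length `≤ b < n`) are joined by closed sites, and so are those
of the endpoints of a long street, since the street is connected. Hence the nearest sites of an
unbounded component of `S^{a,b}` lie in one closed cluster, which cannot be finite: finitely many
squares `Q_n(nz)` would cover the component.
-/

open Set Relation

local notation "ℝ²" => EuclideanSpace ℝ (Fin 2)

def GridAdj (u v : ℤ × ℤ) : Prop := |u.1 - v.1| + |u.2 - v.2| = 1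

def GridAdjOn (P : ℤ × ℤ → Prop) (u v : ℤ × ℤ) : Prop := GridAdj u v ∧ P u ∧ P v

instance (P : ℤ × ℤ → Prop) : Std.Symm (GridAdjOn P) where
  symm u v := fun ⟨huv, hu, hv⟩ => ⟨by rwa [GridAdj, abs_sub_comm v.1, abs_sub_comm v.2], hv, hu⟩

section Lattice

variable {P : ℤ × ℤ → Prop}

theorem reflTransGen_gridAdjOn_of_path (f : ℤ → ℤ × ℤ) (hf : ∀ t, GridAdj (f t) (f (t + 1)))
    {c c' : ℤ} (hP : ∀ t ∈ uIcc c c', P (f t)) :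
    ReflTransGen (GridAdjOn P) (f c) (f c') := by
  wlog hcc' : c ≤ c' generalizing c c'
  · exact symm (this (uIcc_comm c c' ▸ hP) (le_of_not_ge hcc'))
  rw [uIcc_of_le hcc'] at hP
  induction c', hcc' using Int.leInduction with
  | base => rfl
  | succ t hct ih =>
    refine (ih fun s hs => hP s ⟨hs.1, hs.2.trans (by lia)⟩).tail ⟨hf t, ?_, ?_⟩
    · exact hP t ⟨hct, by lia⟩
    · exact hP (t + 1) ⟨by lia, le_rfl⟩

theorem reflTransGen_gridAdjOn_of_mem_prod {I J : Set ℤ} (hI : I.OrdConnected)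
    (hJ : J.OrdConnected) (hP : ∀ u ∈ I ×ˢ J, P u) {z z' : ℤ × ℤ} (hz : z ∈ I ×ˢ J)
    (hz' : z' ∈ I ×ˢ J) : ReflTransGen (GridAdjOn P) z z' := by
  have horizontal : ReflTransGen (GridAdjOn P) (z.1, z.2) (z'.1, z.2) :=
    reflTransGen_gridAdjOn_of_path (·, z.2) (fun t => by simp [GridAdj])
      fun t ht => hP _ ⟨hI.uIcc_subset hz.1 hz'.1 ht, hz.2⟩
  have vertical : ReflTransGen (GridAdjOn P) (z'.1, z.2) (z'.1, z'.2) :=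
    reflTransGen_gridAdjOn_of_path (z'.1, ·) (fun t => by simp [GridAdj])
      fun t ht => hP _ ⟨hz'.1, hJ.uIcc_subset hz.2 hz'.2 ht⟩
  exact horizontal.trans vertical

end Lattice

def closedSquare (k : ℝ) (x : ℝ²) : Set ℝ² := {y | |y 0 - x 0| ≤ k / 2 ∧ |y 1 - x 1| ≤ k / 2}

def latticePoint (r : ℝ) (z : ℤ × ℤ) : ℝ² :=
  WithLp.toLp 2 (fun i : Fin 2 => if i = 0 then r * (z.1 : ℝ) else r * (z.2 : ℝ))

noncomputable def nearestSite (r : ℝ) (x : ℝ²) : ℤ × ℤ := (round (x 0 / r), round (x 1 / r))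

section Geometry

variable {r k d : ℝ} {x y c : ℝ²}

theorem mem_closedSquare : y ∈ closedSquare k x ↔ ∀ i, |y i - x i| ≤ k / 2 := by
  simp [closedSquare, Fin.forall_fin_two]

theorem isBounded_closedSquare : Bornology.IsBounded (closedSquare k x) := by
  refine (Metric.isBounded_closedBall (x := x) (r := k)).subset fun y hy => ?_
  rw [mem_closedSquare] at hy
  have hk : 0 ≤ k := by linarith [abs_nonneg (y 0 - x 0), hy 0]
  rw [Metric.mem_closedBall, EuclideanSpace.dist_eq, Real.sqrt_le_left hk, Fin.sum_univ_two,
    Real.dist_eq, Real.dist_eq]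
  nlinarith [hy 0, hy 1, abs_nonneg (y 0 - x 0), abs_nonneg (y 1 - x 1)]

theorem mem_closedSquare_of_dist_le (hy : y ∈ closedSquare k c) (hxy : dist x y ≤ d) :
    x ∈ closedSquare (k + 2 * d) c := by
  rw [mem_closedSquare] at hy ⊢
  intro i
  calc |x i - c i| ≤ |x i - y i| + |y i - c i| := abs_sub_le _ _ _
    _ ≤ d + k / 2 := add_le_add ((PiLp.dist_apply_le x y i).trans hxy) (hy i)
    _ = (k + 2 * d) / 2 := by ring

theorem latticePoint_nearestSite_apply (x : ℝ²) (i : Fin 2) :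
    latticePoint r (nearestSite r x) i = r * round (x i / r) := by
  fin_cases i <;> simp [latticePoint, nearestSite]

theorem mem_closedSquare_latticePoint_nearestSite (hr : 0 < r) (x : ℝ²) :
    x ∈ closedSquare r (latticePoint r (nearestSite r x)) := by
  rw [mem_closedSquare]
  intro i
  rw [latticePoint_nearestSite_apply]
  calc |x i - r * round (x i / r)| = r * |x i / r - round (x i / r)| := by
        rw [← abs_of_pos hr, ← abs_mul, abs_of_pos hr, mul_sub, mul_div_cancel₀ _ hr.ne']
    _ ≤ r * (1 / 2) := by gcongr; exact abs_sub_round _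
    _ = r / 2 := by ring

theorem mem_closedSquare_latticePoint_nearestSite_of_dist_le (hr : 0 < r)
    (hxy : dist x y ≤ 5 * r / 2) : x ∈ closedSquare (6 * r) (latticePoint r (nearestSite r y)) := by
  have := mem_closedSquare_of_dist_le (mem_closedSquare_latticePoint_nearestSite hr y) hxy
  rwa [show r + 2 * (5 * r / 2) = 6 * r by ring] at this

theorem setOf_mem_closedSquare_latticePoint (r k : ℝ) (x : ℝ²) :
    {z | x ∈ closedSquare k (latticePoint r z)} =
      {t : ℤ | |x 0 - r * t| ≤ k / 2} ×ˢ {t : ℤ | |x 1 - r * t| ≤ k / 2} := by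
  ext z
  simp [closedSquare, latticePoint]

theorem ordConnected_setOf_abs_sub_mul_le (hr : 0 ≤ r) (a d : ℝ) :
    {t : ℤ | |a - r * t| ≤ d}.OrdConnected := by
  have : {t : ℤ | |a - r * t| ≤ d} = (fun t : ℤ => a - r * t) ⁻¹' Icc (-d) d := by
    ext t; simp [abs_le]
  rw [this]
  exact ordConnected_Icc.preimage_anti fun s t hst =>
    sub_le_sub_left (mul_le_mul_of_nonneg_left (Int.cast_le.2 hst) hr) a

theorem isBounded_of_finite_image_nearestSite (hr : 0 < r) {A : Set ℝ²}
    (hA : (nearestSite r '' A).Finite) : Bornology.IsBounded A := by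
  refine ((Bornology.isBounded_biUnion hA).2 fun z _ => isBounded_closedSquare (k := r)
    (x := latticePoint r z)).subset fun x hx => mem_biUnion (mem_image_of_mem _ hx) ?_
  exact mem_closedSquare_latticePoint_nearestSite hr x

end Geometry

section Coupling

variable {r : ℝ} {L : Set ℝ²} {P : ℤ × ℤ → Prop}

theorem reflTransGen_nearestSite_of_dist_le (hr : 0 < r)
    (hP : ∀ x ∈ L, ∀ z, x ∈ closedSquare (6 * r) (latticePoint r z) → P z)
    {x y : ℝ²} (hx : x ∈ L) (hxy : dist x y ≤ 5 * r / 2) :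
    ReflTransGen (GridAdjOn P) (nearestSite r x) (nearestSite r y) := by
  have hnear : ∀ w : ℝ², dist x w ≤ 5 * r / 2 →
      nearestSite r w ∈ {z | x ∈ closedSquare (6 * r) (latticePoint r z)} :=
    fun w => mem_closedSquare_latticePoint_nearestSite_of_dist_le hr
  rw [setOf_mem_closedSquare_latticePoint] at hnear
  exact reflTransGen_gridAdjOn_of_mem_prod (ordConnected_setOf_abs_sub_mul_le hr.le _ _)
    (ordConnected_setOf_abs_sub_mul_le hr.le _ _)
    (fun z hz => hP x hx z (by rwa [← setOf_mem_closedSquare_latticePoint] at hz))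
    (hnear x ((dist_self x).trans_le (by positivity))) (hnear y hxy)

theorem reflTransGen_nearestSite_of_segment_subset (hr : 0 < r)
    (hP : ∀ x ∈ L, ∀ z, x ∈ closedSquare (6 * r) (latticePoint r z) → P z)
    {p q : ℝ²} (hpq : segment ℝ p q ⊆ L) :
    ReflTransGen (GridAdjOn P) (nearestSite r p) (nearestSite r q) := by
  -- By the previous lemma, being joined through closed sites has open classes on the segment.
  refine (convex_segment p q).isPreconnected.induction₂
    (fun x y => ReflTransGen (GridAdjOn P) (nearestSite r x) (nearestSite r y))
    (fun x hx => ?_) (fun _ _ _ _ _ _ => .trans) (fun _ _ _ _ => symm)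
    (left_mem_segment ℝ p q) (right_mem_segment ℝ p q)
  filter_upwards [nhdsWithin_le_nhds (Metric.closedBall_mem_nhds x (by positivity : 0 < 5 * r / 2))]
    with y hy
  exact reflTransGen_nearestSite_of_dist_le hr hP (hpq hx) (dist_comm x y ▸ hy)

theorem reflTransGen_nearestSite_of_reachable {V : Type*} {G : SimpleGraph V} {pos : V → ℝ²}
    (hr : 0 < r) (hP : ∀ x ∈ L, ∀ z, x ∈ closedSquare (6 * r) (latticePoint r z) → P z)
    (hvert : ∀ v, pos v ∈ L)
    (hedge : ∀ v w, G.Adj v w →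
      dist (pos v) (pos w) ≤ 5 * r / 2 ∨ segment ℝ (pos v) (pos w) ⊆ L)
    {v w : V} (hvw : G.Reachable v w) :
    ReflTransGen (GridAdjOn P) (nearestSite r (pos v)) (nearestSite r (pos w)) := by
  obtain ⟨walk⟩ := hvw
  induction walk with
  | nil => rfl
  | @cons u u' _ huu' _ ih =>
    refine .trans ?_ ih
    rcases hedge u u' huu' with hclose | hseg
    · exact reflTransGen_nearestSite_of_dist_le hr hP (hvert u) hclose
    · exact reflTransGen_nearestSite_of_segment_subset hr hP hseg

end Coupling

theorem stmt_10_general {V : Type*} (n : ℕ) (a b : ℝ) (hn : 0 < n)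
    (hbn : b < n)
    (R : EuclideanSpace ℝ (Fin 2) → ℝ)
    (streets : Set (EuclideanSpace ℝ (Fin 2) × EuclideanSpace ℝ (Fin 2)))
    (G : SimpleGraph V) (pos : V → EuclideanSpace ℝ (Fin 2))
    (hvert : ∀ v : V, ∃ s ∈ streets, a ≤ dist s.1 s.2 ∧ (pos v = s.1 ∨ pos v = s.2))
    (hedge : ∀ v w : V, G.Adj v w →
      dist (pos v) (pos w) ≤ b ∨
        ∃ s ∈ streets, a ≤ dist s.1 s.2 ∧
          ((pos v = s.1 ∧ pos w = s.2) ∨ (pos v = s.2 ∧ pos w = s.1)))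
    (hunbounded : ∃ v : V, ¬ Bornology.IsBounded (pos '' {w | G.Reachable v w})) :
    let Qset : ℝ → EuclideanSpace ℝ (Fin 2) → Set (EuclideanSpace ℝ (Fin 2)) :=
      fun k x => {y | |y 0 - x 0| ≤ k / 2 ∧ |y 1 - x 1| ≤ k / 2}
    let center : ℤ × ℤ → EuclideanSpace ℝ (Fin 2) :=
      fun z => WithLp.toLp 2 (fun i : Fin 2 => if i = 0 then (n : ℝ) * (z.1 : ℝ) else (n : ℝ) * (z.2 : ℝ))
    let nOpen : ℤ × ℤ → Prop := fun z =>
      (∀ y ∈ Qset (6 * n) (center z), R y < n) ∧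
      (∀ s ∈ streets, (segment ℝ s.1 s.2 ∩ Qset (6 * n) (center z)).Nonempty →
        dist s.1 s.2 < a)
    let adj : ℤ × ℤ → ℤ × ℤ → Prop := fun z w => |z.1 - w.1| + |z.2 - w.2| = 1
    ∃ z : ℤ × ℤ, ¬ nOpen z ∧
      Set.Infinite {w : ℤ × ℤ |
        Relation.ReflTransGen (fun u u' => adj u u' ∧ ¬ nOpen u ∧ ¬ nOpen u') z w} := by
  intro Qset center nOpen adj
  obtain ⟨v₀, hv₀⟩ := hunbounded
  have hn' : (0 : ℝ) < n := Nat.cast_pos.2 hn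
  set L : Set ℝ² := ⋃ s ∈ {s ∈ streets | a ≤ dist s.1 s.2}, segment ℝ s.1 s.2
  have hstreetL : ∀ s ∈ streets, a ≤ dist s.1 s.2 → segment ℝ s.1 s.2 ⊆ L :=
    fun s hs hlen => subset_biUnion_of_mem (u := fun s : ℝ² × ℝ² => segment ℝ s.1 s.2) ⟨hs, hlen⟩
  have hclosed : ∀ x ∈ L, ∀ z, x ∈ closedSquare (6 * n) (latticePoint n z) → ¬ nOpen z := by
    intro x hx z hxz hz
    obtain ⟨s, ⟨hs, hlen⟩, hxs⟩ := mem_iUnion₂.1 hx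
    exact (hz.2 s hs ⟨x, hxs, hxz⟩).not_ge hlen
  have hvertL : ∀ v, pos v ∈ L := fun v => by
    obtain ⟨s, hs, hlen, h | h⟩ := hvert v <;> rw [h]
    exacts [hstreetL s hs hlen (left_mem_segment ℝ _ _), hstreetL s hs hlen (right_mem_segment ℝ _ _)]
  have hedgeL : ∀ v w, G.Adj v w →
      dist (pos v) (pos w) ≤ 5 * n / 2 ∨ segment ℝ (pos v) (pos w) ⊆ L := fun v w hvw => by
    obtain hclose | ⟨s, hs, hlen, ⟨hv, hw⟩ | ⟨hv, hw⟩⟩ := hedge v w hvw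
    · left; linarith
    · right; rw [hv, hw]; exact hstreetL s hs hlen
    · right; rw [hv, hw, segment_symm]; exact hstreetL s hs hlen
  refine ⟨nearestSite n (pos v₀), hclosed _ (hvertL v₀) _ ?_, fun hfin => hv₀ ?_⟩
  · exact mem_closedSquare_latticePoint_nearestSite_of_dist_le hn'
      ((dist_self _).trans_le (by positivity))
  refine isBounded_of_finite_image_nearestSite hn' (hfin.subset ?_)
  rintro _ ⟨_, ⟨w, hw, rfl⟩, rfl⟩
  exact reflTransGen_nearestSite_of_reachable hn' hclosed hvertL hedgeL hw

/-- Coupling step for `a_c < ∞`: a site `z ∈ ℤ²` is `n`-open if (a) the stabilization radii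
in `Q_{6n}(nz)` are `< n` and (b) no street of length `≥ a` meets `Q_{6n}(nz)`.
If `n > b` and the graph `S^{a,b}` (vertices: endpoints of streets of length `≥ a`;
edges: either a street of length `≥ a`, or a bridge between endpoints at `S`-path distance,
hence Euclidean distance, at most `b`) has an unbounded connected component, then the set of
`n`-closed sites contains an infinite nearest-neighbor connected component in `ℤ²`. -/
theorem stmt_10 {V : Type*} (n : ℕ) (a b : ℝ) (hn : 0 < n) (ha : 0 < a)
    (hb : 0 < b) (hbn : b < n)
    (R : EuclideanSpace ℝ (Fin 2) → ℝ)
    (streets : Set (EuclideanSpace ℝ (Fin 2) × EuclideanSpace ℝ (Fin 2)))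
    (G : SimpleGraph V) (pos : V → EuclideanSpace ℝ (Fin 2))
    (hvert : ∀ v : V, ∃ s ∈ streets, a ≤ dist s.1 s.2 ∧ (pos v = s.1 ∨ pos v = s.2))
    (hedge : ∀ v w : V, G.Adj v w →
      dist (pos v) (pos w) ≤ b ∨
        ∃ s ∈ streets, a ≤ dist s.1 s.2 ∧
          ((pos v = s.1 ∧ pos w = s.2) ∨ (pos v = s.2 ∧ pos w = s.1)))
    (hunbounded : ∃ v : V, ¬ Bornology.IsBounded (pos '' {w | G.Reachable v w})) :
    let Qset : ℝ → EuclideanSpace ℝ (Fin 2) → Set (EuclideanSpace ℝ (Fin 2)) :=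
      fun k x => {y | |y 0 - x 0| ≤ k / 2 ∧ |y 1 - x 1| ≤ k / 2}
    let center : ℤ × ℤ → EuclideanSpace ℝ (Fin 2) :=
      fun z => WithLp.toLp 2 (fun i : Fin 2 => if i = 0 then (n : ℝ) * (z.1 : ℝ) else (n : ℝ) * (z.2 : ℝ))
    let nOpen : ℤ × ℤ → Prop := fun z =>
      (∀ y ∈ Qset (6 * n) (center z), R y < n) ∧
      (∀ s ∈ streets, (segment ℝ s.1 s.2 ∩ Qset (6 * n) (center z)).Nonempty →
        dist s.1 s.2 < a)
    let adj : ℤ × ℤ → ℤ × ℤ → Prop := fun z w => |z.1 - w.1| + |z.2 - w.2| = 1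
    ∃ z : ℤ × ℤ, ¬ nOpen z ∧
      Set.Infinite {w : ℤ × ℤ |
        Relation.ReflTransGen (fun u u' => adj u u' ∧ ¬ nOpen u ∧ ¬ nOpen u') z w} :=
  stmt_10_general n a b hn hbn R streets G pos hvert hedge hunbounded
end
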